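/- Let Π = Cᵀ W^{-1} C where C ∈ ℝ^{n×N} has rank n and W = C Cᵀ, and let Γ be an N×N nonnegative diagonal matrix. If ‖Π - Π Γ Π‖₂ ≤ ε, then for every x ∈ ℝⁿ, |xᵀ(W - C Γ Cᵀ)x| ≤ ε xᵀ W x. -/

import Mathlib

open Matrix

/-!
Put `y = Cᵀ x`. Then `xᵀ W x = yᵀ y` and `xᵀ (W - CΓCᵀ) x = yᵀ (I - Γ) y`. Since `y` lies in the
range of the orthogonal projection `Π` onto the row space of `C`, this equals
`yᵀ Π (I - Γ) Π y = yᵀ (Π - ΠΓΠ) y`, whose absolute value is at most `‖Π - ΠΓΠ‖₂ ‖y‖²`.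
-/

namespace Matrix

variable {m n R : Type*} [Fintype m] [Fintype n]

theorem isUnit_of_rank_eq_card [DecidableEq n] [Field R] {A : Matrix n n R}
    (h : A.rank = Fintype.card n) : IsUnit A := by
  rw [← mulVec_surjective_iff_isUnit]
  have hrange : LinearMap.range A.mulVecLin = ⊤ :=
    Submodule.eq_top_of_finrank_eq (by simpa [Matrix.rank] using h)
  exact LinearMap.range_eq_top.mp hrange

theorem isUnit_mul_transpose_of_rank_eq_card [DecidableEq m] [Field R] [LinearOrder R]
    [IsStrictOrderedRing R] {C : Matrix m n R} (h : C.rank = Fintype.card m) :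
    IsUnit (C * Cᵀ) :=
  isUnit_of_rank_eq_card (by rwa [rank_self_mul_transpose])

theorem dotProduct_mul_mul_transpose_mulVec [CommSemiring R] (C : Matrix m n R)
    (A : Matrix n n R) (x : m → R) :
    x ⬝ᵥ (C * A * Cᵀ) *ᵥ x = (Cᵀ *ᵥ x) ⬝ᵥ A *ᵥ (Cᵀ *ᵥ x) := by
  rw [← mulVec_mulVec, ← mulVec_mulVec, dotProduct_mulVec, ← mulVec_transpose]

theorem abs_dotProduct_mulVec_le [DecidableEq n] (A : Matrix n n ℝ) (y : n → ℝ) :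
    |y ⬝ᵥ A *ᵥ y| ≤ ‖toEuclideanCLM (𝕜 := ℝ) A‖ * (y ⬝ᵥ y) := by
  set v : EuclideanSpace ℝ n := WithLp.toLp 2 y
  have hnorm : y ⬝ᵥ y = ‖v‖ ^ 2 := by
    rw [← real_inner_self_eq_norm_sq, EuclideanSpace.inner_eq_star_dotProduct]
    simp [v]
  rw [← inner_toEuclideanCLM, hnorm]
  calc |inner ℝ v (toEuclideanCLM (𝕜 := ℝ) A v)|
      ≤ ‖v‖ * ‖toEuclideanCLM (𝕜 := ℝ) A v‖ := abs_real_inner_le_norm _ _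
    _ ≤ ‖v‖ * (‖toEuclideanCLM (𝕜 := ℝ) A‖ * ‖v‖) := by
        gcongr; exact ContinuousLinearMap.le_opNorm _ _
    _ = _ := by ring

variable [DecidableEq m] [Field R]

noncomputable def rowProjection (C : Matrix m n R) : Matrix n n R := Cᵀ * (C * Cᵀ)⁻¹ * C

theorem isSymm_rowProjection (C : Matrix m n R) : (rowProjection C).IsSymm := by
  rw [IsSymm, rowProjection, transpose_mul, transpose_mul, transpose_transpose,
    transpose_nonsing_inv, transpose_mul, transpose_transpose, Matrix.mul_assoc]

variable {C : Matrix m n R}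

theorem rowProjection_mul_transpose (h : IsUnit (C * Cᵀ)) : rowProjection C * Cᵀ = Cᵀ := by
  rw [rowProjection, Matrix.mul_assoc, Matrix.mul_assoc,
    nonsing_inv_mul _ ((isUnit_iff_isUnit_det _).mp h),
    Matrix.mul_one]

theorem rowProjection_mul_self (h : IsUnit (C * Cᵀ)) :
    rowProjection C * rowProjection C = rowProjection C := by
  nth_rewrite 2 [rowProjection]
  rw [← Matrix.mul_assoc, ← Matrix.mul_assoc, rowProjection_mul_transpose h, rowProjection]

theorem rowProjection_mulVec_transpose_mulVec (h : IsUnit (C * Cᵀ)) (x : m → R) :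
    rowProjection C *ᵥ (Cᵀ *ᵥ x) = Cᵀ *ᵥ x := by
  rw [mulVec_mulVec, rowProjection_mul_transpose h]

end Matrix

theorem stmt15_general (n N : ℕ) (C : Matrix (Fin n) (Fin N) ℝ) (hrank : C.rank = n)
    (W : Matrix (Fin n) (Fin n) ℝ) (hW : W = C * Cᵀ)
    (P : Matrix (Fin N) (Fin N) ℝ) (hP : P = Cᵀ * W⁻¹ * C)
    (g : Fin N → ℝ) (Γ : Matrix (Fin N) (Fin N) ℝ)
    (hΓ : Γ = Matrix.diagonal g)
    (ε : ℝ)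
    (hnorm : ‖(Matrix.toEuclideanCLM (𝕜 := ℝ) (P - P * Γ * P))‖ ≤ ε) :
    ∀ x : Fin n → ℝ, |x ⬝ᵥ ((W - C * Γ * Cᵀ).mulVec x)| ≤ ε * (x ⬝ᵥ W.mulVec x) := by
  intro x
  subst hW hΓ
  have hunit : IsUnit (C * Cᵀ) := isUnit_mul_transpose_of_rank_eq_card (by simpa using hrank)
  replace hP : P = rowProjection C := hP
  set y := Cᵀ *ᵥ x
  have hPy : P *ᵥ y = y := hP ▸ rowProjection_mulVec_transpose_mulVec hunit x
  have hW : x ⬝ᵥ (C * Cᵀ) *ᵥ x = y ⬝ᵥ y := by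
    simpa using dotProduct_mul_mul_transpose_mulVec C 1 x
  have hquad : x ⬝ᵥ (C * Cᵀ - C * diagonal g * Cᵀ) *ᵥ x = y ⬝ᵥ (P - P * diagonal g * P) *ᵥ y := by
    have hsymm : Pᵀ = P := hP ▸ isSymm_rowProjection C
    calc x ⬝ᵥ (C * Cᵀ - C * diagonal g * Cᵀ) *ᵥ x = x ⬝ᵥ (C * (1 - diagonal g) * Cᵀ) *ᵥ x := by
          rw [Matrix.mul_sub, Matrix.sub_mul, Matrix.mul_one]
      _ = y ⬝ᵥ (1 - diagonal g) *ᵥ y := dotProduct_mul_mul_transpose_mulVec _ _ _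
      _ = y ⬝ᵥ (P * (1 - diagonal g) * Pᵀ) *ᵥ y := by
          rw [dotProduct_mul_mul_transpose_mulVec, hsymm, hPy]
      _ = y ⬝ᵥ (P - P * diagonal g * P) *ᵥ y := by
          rw [hsymm, Matrix.mul_sub, Matrix.sub_mul, Matrix.mul_one, hP,
            rowProjection_mul_self hunit]
  rw [hquad, hW]
  exact (abs_dotProduct_mulVec_le _ y).trans
    (mul_le_mul_of_nonneg_right hnorm (by simpa using dotProduct_star_self_nonneg y))

/-- Operator-norm bound on the projection `Π = Cᵀ W⁻¹ C` translates into a relative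
quadratic-form bound on the Gramians: `‖Π - ΠΓΠ‖₂ ≤ ε` implies
`|xᵀ(W - CΓCᵀ)x| ≤ ε xᵀWx` for all `x`. -/
theorem stmt15 (n N : ℕ) (C : Matrix (Fin n) (Fin N) ℝ) (hrank : C.rank = n)
    (W : Matrix (Fin n) (Fin n) ℝ) (hW : W = C * Cᵀ)
    (P : Matrix (Fin N) (Fin N) ℝ) (hP : P = Cᵀ * W⁻¹ * C)
    (g : Fin N → ℝ) (hg : ∀ i, 0 ≤ g i) (Γ : Matrix (Fin N) (Fin N) ℝ)
    (hΓ : Γ = Matrix.diagonal g)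
    (ε : ℝ)
    (hnorm : ‖(Matrix.toEuclideanCLM (𝕜 := ℝ) (P - P * Γ * P))‖ ≤ ε) :
    ∀ x : Fin n → ℝ, |x ⬝ᵥ ((W - C * Γ * Cᵀ).mulVec x)| ≤ ε * (x ⬝ᵥ W.mulVec x) :=
  stmt15_general n N C hrank W hW P hP g Γ hΓ ε hnorm
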